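/- If σ is strongly erasing and verifies the optimality condition, then for every finite binary word w there exists h ∈ ℕ such that f_σ^h([w]) = [0,1], where [w] is the cylinder of points whose expansion begins with w; consequently f_σ is topologically mixing. -/

import Mathlib

/-- Apply a `k`-block substitution blockwise to a finite word, dropping the
trailing partial block (the paper's truncation convention). -/
def blockApply (k : Nat) (sigma : List Bool -> List Bool) (w : List Bool) : List Bool :=
  if h : 0 < k && k <= w.length then
    sigma (w.take k) ++ blockApply k sigma (w.drop k)
  else []
termination_by w.length
decreasing_by
  simp only [Bool.and_eq_true, decide_eq_true_eq] at h
  simp [List.length_drop]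
  omega

/-- The length-`m` prefix of an infinite binary word. -/
def prefixOf (u : Nat -> Bool) (m : Nat) : List Bool := List.ofFn fun i : Fin m => u i

/-- Concatenation of the first `m` words of a sequence of finite words. -/
def concatPre (v : Nat -> List Bool) (m : Nat) : List Bool :=
  (List.ofFn fun i : Fin m => v i).flatten

/-- The optimality condition: every infinite binary word is an infinite
concatenation of nonempty images of length-`k` blocks under `sigma`. -/
def OC (k : Nat) (sigma : List Bool -> List Bool) : Prop :=
  ∀ w : Nat -> Bool, ∃ u : Nat -> List Bool,
    (∀ i, (u i).length = k ∧ sigma (u i) ≠ []) ∧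
    ∀ m, concatPre (fun i => sigma (u i)) m
        = prefixOf w (concatPre (fun i => sigma (u i)) m).length

/-- Value of a finite binary word read as binary digits after the point. -/
noncomputable def valFin (w : List Bool) : ℝ :=
  (w.zipIdx.map fun p => if p.1 then ((2:ℝ))⁻¹ ^ (p.2 + 1) else 0).sum

/-- Value of an infinite binary word read as binary digits after the point. -/
noncomputable def valInf (u : Nat -> Bool) : ℝ :=
  ∑' i : Nat, if u i then ((2:ℝ))⁻¹ ^ (i + 1) else 0

/-- A word is not eventually zero (it has infinitely many ones). -/
def NEZ (u : Nat -> Bool) : Prop := ∀ n, ∃ m, n ≤ m ∧ u m = true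

open Classical in
/-- The unique binary expansion of `x ∈ (0,1]` not ending in `0^∞`
(junk value, the zero word, if no such expansion exists). -/
noncomputable def tilde (x : ℝ) : Nat -> Bool :=
  if h : ∃ u : Nat -> Bool, NEZ u ∧ valInf u = x then h.choose else fun _ => false

open Classical in
/-- The interval map induced by the erasing `k`-block substitution `sigma`
(with erased block `weps`) acting on binary expansions: `f x = 0.sigma(x̃)`,
with value `0` at `x = 0` (no expansion not ending in `0^∞`) and when
`x̃ = weps^∞`. -/
noncomputable def fSigma (k : Nat) (sigma : List Bool -> List Bool) (weps : List Bool)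
    (x : ℝ) : ℝ :=
  if (¬ ∃ u : Nat -> Bool, NEZ u ∧ valInf u = x) ∨
     (∀ i : Nat, tilde x i = weps.getD (i % k) false) then 0
  else ⨆ n : Nat, valFin (blockApply k sigma (prefixOf (tilde x) (n * k)))

/-- The set of `k`-roundings of a finite word `w`: extensions of `w` of length
the least multiple of `k` that is `≥ |w|`. -/
def kRound (k : Nat) (w : List Bool) : Set (List Bool) :=
  {u | ∃ v : List Bool, u = w ++ v ∧ u.length = k * ((w.length + k - 1) / k)}

/-- `wIter k sigma n w` is the set `w^[n]` of the paper: `w^[0] = {w}` and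
`w^[n] = {sigma(r) : r a k-rounding of an element of w^[n-1]}`. -/
def wIter (k : Nat) (sigma : List Bool -> List Bool) : Nat -> List Bool -> Set (List Bool)
  | 0, w => {w}
  | n + 1, w => {u | ∃ p ∈ wIter k sigma n w, ∃ r ∈ kRound k p, u = blockApply k sigma r}

/-- The cylinder `[w]`: points of `[0,1]` having a binary expansion beginning
with the finite word `w`. -/
def Cyl (w : List Bool) : Set ℝ :=
  {x | ∃ u : Nat -> Bool, (∀ i < w.length, u i = w.getD i false) ∧ x = valInf u}

/-! A point of `Cyl (blockApply k sigma r)` is `0.σ(r)S`. The optimality condition parses `S` as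
`σ(u₀)σ(u₁)⋯` with nonerased blocks `uᵢ`, so `0.r u₀ weps u₁ weps ⋯` is a preimage in `Cyl r`; the
interleaved erased blocks make this word neither eventually `0` nor equal to `weps^∞`, the two
cases where `fSigma` is defined to be `0`. Following the roundings that witness `[] ∈ w^[n]`
therefore gives `f^n([w]) = [0,1]`. Since `[] ∈ w^[n]` persists for all larger `n` and every open
set meeting `[0,1]` contains a cylinder, `f` is topologically mixing. -/

open Filter Topology

def bits (u : ℕ → Bool) : ℕ → Fin 2 := fun i => if u i then 1 else 0

lemma ofDigitsTerm_bits (u : ℕ → Bool) (i : ℕ) :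
    Real.ofDigitsTerm (bits u) i = if u i then (2 : ℝ)⁻¹ ^ (i + 1) else 0 := by
  cases h : u i <;> simp [Real.ofDigitsTerm, bits, h]

lemma valInf_eq_ofDigits (u : ℕ → Bool) : valInf u = Real.ofDigits (bits u) := by
  simp only [valInf, Real.ofDigits, ofDigitsTerm_bits]

lemma valInf_mem_Icc (u : ℕ → Bool) : valInf u ∈ Set.Icc (0 : ℝ) 1 := by
  rw [valInf_eq_ofDigits]
  exact ⟨Real.ofDigits_nonneg _, Real.ofDigits_le_one _⟩

lemma exists_valInf_eq {y : ℝ} (hy : y ∈ Set.Icc (0 : ℝ) 1) : ∃ u : ℕ → Bool, valInf u = y := by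
  obtain ⟨d, -, rfl⟩ := Real.ofDigits_SurjOn (b := 2) one_lt_two hy
  refine ⟨fun i => d i = 1, ?_⟩
  rw [valInf_eq_ofDigits]
  congr 1
  funext i
  simp only [bits, decide_eq_true_eq]
  split_ifs with h
  · exact h.symm
  · omega

lemma abs_valInf_sub_le {u v : ℕ → Bool} {n : ℕ} (h : ∀ i < n, u i = v i) :
    |valInf u - valInf v| ≤ ((2 : ℝ) ^ n)⁻¹ := by
  rw [valInf_eq_ofDigits, valInf_eq_ofDigits]
  exact_mod_cast Real.abs_ofDigits_sub_ofDigits_le fun i hi => by simp [bits, h i hi]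

lemma valFin_append_singleton (w : List Bool) (b : Bool) :
    valFin (w ++ [b]) = valFin w + if b then (2 : ℝ)⁻¹ ^ (w.length + 1) else 0 := by
  simp [valFin, List.zipIdx_append]

lemma prefixOf_succ (u : ℕ → Bool) (m : ℕ) : prefixOf u (m + 1) = prefixOf u m ++ [u m] := by
  rw [prefixOf, prefixOf, List.ofFn_succ_last]; rfl

lemma valFin_prefixOf (u : ℕ → Bool) (m : ℕ) :
    valFin (prefixOf u m) = ∑ i ∈ Finset.range m, Real.ofDigitsTerm (bits u) i := by
  induction m with
  | zero => simp [prefixOf, valFin]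
  | succ m ih =>
    rw [prefixOf_succ, valFin_append_singleton, ih, Finset.sum_range_succ, ofDigitsTerm_bits]
    simp [prefixOf]

lemma tendsto_valFin_prefixOf (u : ℕ → Bool) :
    Tendsto (fun m => valFin (prefixOf u m)) atTop (𝓝 (valInf u)) := by
  simp only [valFin_prefixOf, valInf_eq_ofDigits]
  exact Real.summable_ofDigitsTerm.hasSum.tendsto_sum_nat

lemma valFin_prefixOf_le_valInf (u : ℕ → Bool) (m : ℕ) : valFin (prefixOf u m) ≤ valInf u := by
  rw [valFin_prefixOf, valInf_eq_ofDigits]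
  exact Real.summable_ofDigitsTerm.sum_le_tsum _ fun _ _ => Real.ofDigitsTerm_nonneg

lemma prefixOf_getD (w : List Bool) : prefixOf (fun i => w.getD i false) w.length = w :=
  List.ext_getElem (by simp [prefixOf]) fun _ _ _ => by simp [prefixOf]

lemma valFin_le_one (w : List Bool) : valFin w ≤ 1 := by
  rw [← prefixOf_getD w]
  exact (valFin_prefixOf_le_valInf _ _).trans (valInf_mem_Icc _).2

lemma valFin_le_valFin_append (w c : List Bool) : valFin w ≤ valFin (w ++ c) := by
  simp only [valFin, List.zipIdx_append, List.map_append, List.sum_append, le_add_iff_nonneg_right]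
  exact List.sum_nonneg fun x hx => by
    obtain ⟨p, -, rfl⟩ := List.mem_map.1 hx
    split <;> positivity

lemma valInf_eq_sum_add (u : ℕ → Bool) (n : ℕ) :
    valInf u = ∑ i ∈ Finset.range n, (if u i then (2 : ℝ)⁻¹ ^ (i + 1) else 0)
      + ((2 : ℝ) ^ n)⁻¹ * valInf (fun i => u (i + n)) := by
  simp only [valInf_eq_ofDigits, ← ofDigitsTerm_bits]
  exact_mod_cast Real.ofDigits_eq_sum_add_ofDigits (bits u) n

lemma valInf_pos {u : ℕ → Bool} {m : ℕ} (hm : u m = true) : 0 < valInf u := by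
  rw [valInf_eq_ofDigits]
  refine lt_of_lt_of_le ?_
    (Real.summable_ofDigitsTerm.le_tsum m fun _ _ => Real.ofDigitsTerm_nonneg)
  rw [ofDigitsTerm_bits, if_pos hm]
  positivity

lemma valInf_lt_valInf {u v : ℕ → Bool} {n : ℕ} (h : ∀ i < n, u i = v i)
    (hu : u n = true) (hv : v n = false) (hNEZ : NEZ u) : valInf v < valInf u := by
  obtain ⟨m, hm, hum⟩ := hNEZ (n + 1)
  have htail_pos : 0 < valInf (fun i => u (i + (n + 1))) :=
    valInf_pos (m := m - (n + 1)) (by rwa [Nat.sub_add_cancel hm])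
  have htail_le := (valInf_mem_Icc fun i => v (i + (n + 1))).2
  have hsum : ∀ i ∈ Finset.range n, (if u i then (2 : ℝ)⁻¹ ^ (i + 1) else 0)
      = if v i then (2 : ℝ)⁻¹ ^ (i + 1) else 0 := fun i hi => by
    rw [h i (Finset.mem_range.1 hi)]
  rw [valInf_eq_sum_add u (n + 1), valInf_eq_sum_add v (n + 1), Finset.sum_range_succ,
    Finset.sum_range_succ, Finset.sum_congr rfl hsum, hu, hv, if_pos rfl, if_neg (by simp),
    ← inv_pow]
  have : (0 : ℝ) < 2⁻¹ ^ (n + 1) := by positivity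
  nlinarith

lemma NEZ.eq_of_valInf_eq {u v : ℕ → Bool} (hu : NEZ u) (hv : NEZ v)
    (h : valInf u = valInf v) : u = v := by
  classical
  by_contra hne
  have hex : ∃ n, u n ≠ v n := Function.ne_iff.1 hne
  have hagree : ∀ i < Nat.find hex, u i = v i := fun i hi => not_not.1 (Nat.find_min hex hi)
  cases hun : u (Nat.find hex) <;> cases hvn : v (Nat.find hex)
  · exact Nat.find_spec hex (hun.trans hvn.symm)
  · exact h.not_lt (valInf_lt_valInf (fun i hi => (hagree i hi).symm) hvn hun hv)
  · exact h.not_gt (valInf_lt_valInf hagree hun hvn hu)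
  · exact Nat.find_spec hex (hun.trans hvn.symm)

lemma tilde_valInf {u : ℕ → Bool} (hu : NEZ u) : tilde (valInf u) = u := by
  have hex : ∃ v : ℕ → Bool, NEZ v ∧ valInf v = valInf u := ⟨u, hu, rfl⟩
  rw [tilde, dif_pos hex]
  exact hex.choose_spec.1.eq_of_valInf_eq hu hex.choose_spec.2

section Words

variable {k : ℕ} (sigma : List Bool → List Bool)

@[simp] lemma blockApply_nil : blockApply k sigma [] = [] := by
  rw [blockApply, dif_neg (by simp; omega)]

lemma blockApply_append_of_length_eq (hk : 0 < k) {c : List Bool} (hc : c.length = k)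
    (w : List Bool) : blockApply k sigma (c ++ w) = sigma c ++ blockApply k sigma w := by
  rw [blockApply, dif_pos (by simp [hc, hk]), ← hc, List.take_left, List.drop_left]

lemma blockApply_append (hk : 0 < k) {n : ℕ} {a : List Bool} (ha : a.length = n * k)
    (b : List Bool) :
    blockApply k sigma (a ++ b) = blockApply k sigma a ++ blockApply k sigma b := by
  induction n generalizing a with
  | zero => simp [List.eq_nil_of_length_eq_zero (by simpa using ha)]
  | succ n ih =>
    have htake : (a.take k).length = k := List.length_take_of_le (by rw [ha]; nlinarith)
    have hdrop : (a.drop k).length = n * k := by rw [List.length_drop, ha]; ring_nf; omega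
    rw [← List.take_append_drop k a, List.append_assoc,
      blockApply_append_of_length_eq sigma hk htake, blockApply_append_of_length_eq sigma hk htake,
      ih hdrop, List.append_assoc]

lemma concatPre_succ (v : ℕ → List Bool) (m : ℕ) :
    concatPre v (m + 1) = concatPre v m ++ v m := by
  rw [concatPre, concatPre, List.ofFn_succ_last, List.flatten_concat]
  rfl

lemma length_concatPre {B : ℕ → List Bool} (hB : ∀ t, (B t).length = k) (n : ℕ) :
    (concatPre B n).length = n * k := by
  induction n with
  | zero => simp [concatPre]
  | succ n ih => rw [concatPre_succ, List.length_append, ih, hB, Nat.succ_mul]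

lemma blockApply_concatPre (hk : 0 < k) {B : ℕ → List Bool} (hB : ∀ t, (B t).length = k)
    (n : ℕ) : blockApply k sigma (concatPre B n) = concatPre (fun t => sigma (B t)) n := by
  induction n with
  | zero => simp [concatPre]
  | succ n ih =>
    rw [concatPre_succ, blockApply_append sigma hk (length_concatPre hB n), ih, concatPre_succ,
      ← List.append_nil (B n), blockApply_append_of_length_eq sigma hk (hB n), blockApply_nil,
      List.append_nil, List.append_nil]

lemma le_length_concatPre {v : ℕ → List Bool} (hv : ∀ i, v i ≠ []) (m : ℕ) :
    m ≤ (concatPre v m).length := by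
  induction m with
  | zero => simp
  | succ m ih =>
    rw [concatPre_succ, List.length_append]
    have := List.length_pos_iff.2 (hv m)
    omega

lemma prefixOf_add (u : ℕ → Bool) (m n : ℕ) :
    prefixOf u (m + n) = prefixOf u m ++ prefixOf (fun i => u (m + i)) n := by
  simp only [prefixOf, List.ofFn_add]
  rfl

lemma prefixOf_append (r : List Bool) (u : ℕ → Bool) (n : ℕ) :
    prefixOf (r ++ₛ u) (r.length + n) = r ++ prefixOf u n := by
  rw [prefixOf_add (r ++ₛ u)]
  congr 1
  · exact List.ext_getElem (by simp [prefixOf]) fun i _ h =>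
      by simp only [prefixOf, List.getElem_ofFn]; exact Stream'.get_append_left i r u h
  · congr 1
    funext i
    exact Stream'.get_append_right i r u

lemma mem_Cyl_iff {w : List Bool} {x : ℝ} : x ∈ Cyl w ↔ ∃ u : ℕ → Bool, x = valInf (w ++ₛ u) := by
  constructor
  · rintro ⟨u, hu, rfl⟩
    refine ⟨fun i => u (w.length + i), congrArg valInf (funext fun i => ?_)⟩
    rcases lt_or_ge i w.length with hi | hi
    · rw [hu i hi, List.getD_eq_getElem _ _ hi]
      exact (Stream'.get_append_left i w _ hi).symm
    · obtain ⟨j, rfl⟩ := Nat.exists_eq_add_of_le hi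
      exact (Stream'.get_append_right j w fun i => u (w.length + i)).symm
  · rintro ⟨u, rfl⟩
    exact ⟨_, fun i hi => by
      rw [List.getD_eq_getElem _ _ hi]; exact Stream'.get_append_left i w u hi, rfl⟩

lemma Cyl_append_subset (w v : List Bool) : Cyl (w ++ v) ⊆ Cyl w := by
  intro x hx
  obtain ⟨u, rfl⟩ := mem_Cyl_iff.1 hx
  exact mem_Cyl_iff.2 ⟨v ++ₛ u, congrArg valInf (Stream'.append_append_stream w v u)⟩

lemma Cyl_subset_Icc (w : List Bool) : Cyl w ⊆ Set.Icc 0 1 := by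
  rintro x ⟨u, -, rfl⟩
  exact valInf_mem_Icc u

lemma NEZ.append {u : ℕ → Bool} (hu : NEZ u) (r : List Bool) : NEZ (r ++ₛ u) := fun n => by
  obtain ⟨m, hm, hum⟩ := hu n
  exact ⟨r.length + m, by omega, (Stream'.get_append_right m r u).trans hum⟩

end Words

section Blocks

variable {k : ℕ}

lemma List.true_mem_or_true_mem_of_ne {a b : List Bool} (hlen : a.length = b.length)
    (hne : a ≠ b) : true ∈ a ∨ true ∈ b := by
  by_contra h
  push Not at h
  have hfalse : ∀ {l : List Bool}, true ∉ l → l = List.replicate l.length false :=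
    fun hl => List.eq_replicate_iff.2 ⟨rfl, fun x hx => by cases x <;> simp_all⟩
  exact hne ((hfalse h.1).trans (hlen ▸ (hfalse h.2).symm))

lemma List.exists_getD_ne_of_ne {a b : List Bool} (hlen : a.length = b.length) (hne : a ≠ b) :
    ∃ j < a.length, a.getD j false ≠ b.getD j false := by
  by_contra h
  push Not at h
  exact hne (List.ext_getElem hlen fun i h1 h2 => by
    simpa [List.getD_eq_getElem, h1, h2] using h i h1)

def blockWord (k : ℕ) (B : ℕ → List Bool) : ℕ → Bool := fun i => (B (i / k)).getD (i % k) false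

lemma blockWord_mul_add (B : ℕ → List Bool) (t : ℕ) {j : ℕ} (hj : j < k) :
    blockWord k B (t * k + j) = (B t).getD j false := by
  have hk : 0 < k := by omega
  simp only [blockWord]
  rw [add_comm, Nat.add_mul_div_right _ _ hk, Nat.add_mul_mod_self_right, Nat.div_eq_of_lt hj,
    Nat.mod_eq_of_lt hj, zero_add]

lemma prefixOf_blockWord {B : ℕ → List Bool} (hB : ∀ t, (B t).length = k) (n : ℕ) :
    prefixOf (blockWord k B) (n * k) = concatPre B n := by
  induction n with
  | zero => simp [prefixOf, concatPre]
  | succ n ih =>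
    rw [Nat.succ_mul, prefixOf_add, ih, concatPre_succ]
    congr 1
    refine List.ext_getElem (by simp [prefixOf, hB]) fun i hi _ => ?_
    have hi : i < k := by simpa [prefixOf] using hi
    simp [prefixOf, blockWord_mul_add B n hi, hB, hi]

lemma NEZ_blockWord (hk : 0 < k) {B : ℕ → List Bool} (hB : ∀ t, (B t).length = k)
    (h : ∀ N, ∃ t ≥ N, true ∈ B t) : NEZ (blockWord k B) := fun N => by
  obtain ⟨t, ht, hmem⟩ := h N
  obtain ⟨j, hj, hjt⟩ := List.getElem_of_mem hmem
  have hjk : j < k := hB t ▸ hj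
  refine ⟨t * k + j, by nlinarith, ?_⟩
  rw [blockWord_mul_add B t hjk, List.getD_eq_getElem _ _ hj, hjt]

lemma concatPre_two_mul {v : ℕ → List Bool} (hodd : ∀ t, v (2 * t + 1) = []) (t : ℕ) :
    concatPre v (2 * t) = concatPre (fun t => v (2 * t)) t := by
  induction t with
  | zero => rfl
  | succ t ih => rw [Nat.mul_succ, concatPre_succ, concatPre_succ, hodd, List.append_nil, ih,
      concatPre_succ]

end Blocks

section SetIterates

variable {k : ℕ} {sigma : List Bool → List Bool}

lemma mem_wIter_succ_iff (n : ℕ) (p u : List Bool) :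
    u ∈ wIter k sigma (n + 1) p ↔ ∃ r ∈ kRound k p, u ∈ wIter k sigma n (blockApply k sigma r) := by
  induction n generalizing u with
  | zero => simp [wIter, eq_comm]
  | succ n ih =>
    simp only [wIter] at ih ⊢
    constructor
    · rintro ⟨q, hq, r', hr', rfl⟩
      obtain ⟨r, hr, hq⟩ := (ih q).1 hq
      exact ⟨r, hr, q, hq, r', hr', rfl⟩
    · rintro ⟨r, hr, q, hq, r', hr', rfl⟩
      exact ⟨q, (ih q).2 ⟨r, hr, hq⟩, r', hr', rfl⟩

lemma nil_mem_wIter_of_le (hk : 0 < k) {n m : ℕ} {w : List Bool} (h : [] ∈ wIter k sigma n w)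
    (hnm : n ≤ m) : [] ∈ wIter k sigma m w := by
  induction hnm with
  | refl => exact h
  | step _ ih =>
    refine ⟨[], ih, [], ⟨[], rfl, ?_⟩, (blockApply_nil sigma).symm⟩
    simp [Nat.div_eq_of_lt (Nat.sub_one_lt_of_lt hk)]

end SetIterates

section InducedMap

variable (k : ℕ) (sigma : List Bool → List Bool) (weps : List Bool)

lemma fSigma_mem_Icc (x : ℝ) : fSigma k sigma weps x ∈ Set.Icc 0 1 := by
  rw [fSigma]
  split
  · exact ⟨le_rfl, zero_le_one⟩
  · have hbdd : BddAbove
        (Set.range fun n => valFin (blockApply k sigma (prefixOf (tilde x) (n * k)))) :=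
      ⟨1, Set.forall_mem_range.2 fun _ => valFin_le_one _⟩
    refine ⟨le_trans ?_ (le_ciSup hbdd 0), ciSup_le fun n => valFin_le_one _⟩
    simp [prefixOf, valFin]

variable {k sigma weps}

lemma fSigma_valInf_of_tendsto (hk : 0 < k) {X : ℕ → Bool} (hX : NEZ X)
    (hper : ∃ i, X i ≠ weps.getD (i % k) false) {φ : ℕ → ℕ} (hφ : Tendsto φ atTop atTop) {y : ℝ}
    (hy : Tendsto (fun t => valFin (blockApply k sigma (prefixOf X (φ t * k)))) atTop (𝓝 y)) :
    fSigma k sigma weps (valInf X) = y := by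
  set F : ℕ → ℝ := fun n => valFin (blockApply k sigma (prefixOf X (n * k)))
  have hmono : Monotone F := monotone_nat_of_le_succ fun n => by
    simp only [F]
    rw [Nat.succ_mul, prefixOf_add, blockApply_append sigma hk (n := n) (by simp [prefixOf])]
    exact valFin_le_valFin_append _ _
  have hbdd : BddAbove (Set.range F) := ⟨1, Set.forall_mem_range.2 fun n => valFin_le_one _⟩
  have hF : fSigma k sigma weps (valInf X) = ⨆ n, F n := by
    rw [fSigma, if_neg, tilde_valInf hX]
    rw [tilde_valInf hX, not_or, not_not, not_forall]
    exact ⟨⟨X, hX, rfl⟩, hper⟩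
  rw [hF]
  exact tendsto_nhds_unique ((tendsto_atTop_ciSup hmono hbdd).comp hφ) hy

lemma Cyl_blockApply_subset_image (hk : 0 < k) (hlen : weps.length = k)
    (hweps : sigma weps = []) (hOC : OC k sigma) {r : List Bool} {m : ℕ} (hr : r.length = m * k) :
    Cyl (blockApply k sigma r) ⊆ fSigma k sigma weps '' Cyl r := by
  intro x hx
  obtain ⟨S, rfl⟩ := mem_Cyl_iff.1 hx
  obtain ⟨u, hu, hparse⟩ := hOC S
  have hune : ∀ t, u t ≠ weps := fun t h => (hu t).2 (h ▸ hweps)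
  set B : ℕ → List Bool := fun j => if j % 2 = 0 then u (j / 2) else weps with hBdef
  have hBeven : ∀ t, B (2 * t) = u t := fun t => by simp [hBdef]
  have hBodd : ∀ t, B (2 * t + 1) = weps := fun t => by simp [hBdef, Nat.add_mod]
  have hBlen : ∀ j, (B j).length = k := fun j => by
    simp only [hBdef]
    split
    · exact (hu _).1
    · exact hlen
  have hNEZ : NEZ (blockWord k B) := NEZ_blockWord hk hBlen fun N => by
    rcases List.true_mem_or_true_mem_of_ne ((hu N).1.trans hlen.symm) (hune N) with h | h
    · exact ⟨2 * N, by omega, (hBeven N).symm ▸ h⟩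
    · exact ⟨2 * N + 1, by omega, (hBodd N).symm ▸ h⟩
  have hper : ∃ i, (r ++ₛ blockWord k B) i ≠ weps.getD (i % k) false := by
    obtain ⟨j, hj, hne⟩ := List.exists_getD_ne_of_ne ((hu 0).1.trans hlen.symm) (hune 0)
    have hjk : j < k := (hu 0).1 ▸ hj
    refine ⟨r.length + j, ?_⟩
    rw [hr, Nat.mul_add_mod_self_right, Nat.mod_eq_of_lt hjk, ← hr]
    have hval := blockWord_mul_add B 0 hjk
    rw [zero_mul, zero_add, hBeven 0] at hval
    exact ((Stream'.get_append_right j r (blockWord k B)).trans hval).trans_ne hne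
  have himage : ∀ t, blockApply k sigma (prefixOf (r ++ₛ blockWord k B) ((m + 2 * t) * k)) =
      prefixOf (blockApply k sigma r ++ₛ S)
        ((blockApply k sigma r).length + (concatPre (fun i => sigma (u i)) t).length) := fun t => by
    rw [prefixOf_append, add_mul, ← hr, prefixOf_append, prefixOf_blockWord hBlen,
      blockApply_append sigma hk hr, blockApply_concatPre sigma hk hBlen,
      concatPre_two_mul (fun t => by simp only [hBodd, hweps]), ← hparse]
    simp only [hBeven]
  refine ⟨_, mem_Cyl_iff.2 ⟨blockWord k B, rfl⟩,
    fSigma_valInf_of_tendsto hk (hNEZ.append r) hper (φ := fun t => m + 2 * t)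
      (tendsto_atTop_mono (fun t => show t ≤ m + 2 * t by omega) tendsto_id) ?_⟩
  simp only [himage]
  refine (tendsto_valFin_prefixOf _).comp (tendsto_atTop_mono (fun t => ?_) tendsto_id)
  have := le_length_concatPre (fun i => (hu i).2) t
  simp only [id]
  omega

end InducedMap

section Cylinders

variable {k : ℕ} {sigma : List Bool → List Bool} {weps : List Bool}

lemma Icc_subset_image_iterate_Cyl (hk : 0 < k) (hlen : weps.length = k)
    (hweps : sigma weps = []) (hOC : OC k sigma) (n : ℕ) :
    ∀ p, [] ∈ wIter k sigma n p → Set.Icc 0 1 ⊆ (fSigma k sigma weps)^[n] '' Cyl p := by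
  induction n with
  | zero =>
    rintro p rfl y hy
    obtain ⟨u, rfl⟩ := exists_valInf_eq hy
    exact ⟨valInf u, mem_Cyl_iff.2 ⟨u, rfl⟩, rfl⟩
  | succ n ih =>
    intro p hp
    obtain ⟨r, ⟨v, rfl, hrlen⟩, hr⟩ := (mem_wIter_succ_iff n p []).1 hp
    calc Set.Icc 0 1
        ⊆ (fSigma k sigma weps)^[n] '' Cyl (blockApply k sigma (p ++ v)) := ih _ hr
      _ ⊆ (fSigma k sigma weps)^[n] '' (fSigma k sigma weps '' Cyl (p ++ v)) :=
        Set.image_mono (Cyl_blockApply_subset_image hk hlen hweps hOC (hrlen.trans (mul_comm _ _)))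
      _ ⊆ (fSigma k sigma weps)^[n + 1] '' Cyl p := by
        rw [← Set.image_comp, ← Function.iterate_succ]
        exact Set.image_mono (Cyl_append_subset p v)

lemma image_iterate_Cyl_eq_Icc (hk : 0 < k) (hlen : weps.length = k)
    (hweps : sigma weps = []) (hOC : OC k sigma) {n : ℕ} {p : List Bool}
    (hp : [] ∈ wIter k sigma n p) : (fSigma k sigma weps)^[n] '' Cyl p = Set.Icc 0 1 :=
  subset_antisymm
    ((Set.MapsTo.iterate (fun x _ => fSigma_mem_Icc k sigma weps x) n).mono_left
      (Cyl_subset_Icc p)).image_subset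
    (Icc_subset_image_iterate_Cyl hk hlen hweps hOC n p hp)

lemma exists_Cyl_subset {A : Set ℝ} (hA : IsOpen A) (hne : (A ∩ Set.Icc 0 1).Nonempty) :
    ∃ w, Cyl w ⊆ A := by
  obtain ⟨a, haA, haI⟩ := hne
  obtain ⟨ε, hε, hball⟩ := Metric.isOpen_iff.1 hA a haA
  obtain ⟨u, rfl⟩ := exists_valInf_eq haI
  obtain ⟨m, hm⟩ := exists_pow_lt_of_lt_one hε (by norm_num : (2 : ℝ)⁻¹ < 1)
  refine ⟨prefixOf u m, fun x ⟨v, hv, hx⟩ => hball ?_⟩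
  rw [hx, Metric.mem_ball, Real.dist_eq]
  refine (abs_valInf_sub_le fun i hi => ?_).trans_lt (by rwa [← inv_pow])
  simpa [prefixOf, List.getD_eq_getElem, hi] using hv i (by simpa [prefixOf] using hi)

end Cylinders

theorem fSigma_mixing_general
    (k : Nat) (sigma : List Bool -> List Bool) (weps : List Bool)
    (hk : 2 ≤ k) (hlen : weps.length = k)
    (herase : ∀ w : List Bool, w.length = k → (sigma w = [] ↔ w = weps))
    (hSE : ∀ w : List Bool, ∃ n : Nat, [] ∈ wIter k sigma n w)
    (hOC : OC k sigma) :
    (∀ w : List Bool, ∃ h : Nat,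
        (fSigma k sigma weps)^[h] '' Cyl w = Set.Icc 0 1) ∧
    (∀ A B : Set ℝ, IsOpen A → IsOpen B →
      (A ∩ Set.Icc 0 1).Nonempty → (B ∩ Set.Icc 0 1).Nonempty →
      ∃ N : Nat, ∀ n ≥ N,
        ((fSigma k sigma weps)^[n] '' (A ∩ Set.Icc 0 1) ∩ B).Nonempty) := by
  have hk0 : 0 < k := by omega
  have hcyl : ∀ {n p}, [] ∈ wIter k sigma n p → (fSigma k sigma weps)^[n] '' Cyl p = Set.Icc 0 1 :=
    image_iterate_Cyl_eq_Icc hk0 hlen ((herase weps hlen).2 rfl) hOC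
  refine ⟨fun w => (hSE w).imp fun n => hcyl, ?_⟩
  rintro A B hA - hAne ⟨b, hbB, hbI⟩
  obtain ⟨w, hw⟩ := exists_Cyl_subset hA hAne
  obtain ⟨N, hN⟩ := hSE w
  refine ⟨N, fun n hn => ⟨b, ?_, hbB⟩⟩
  rw [← hcyl (nil_mem_wIter_of_le hk0 hN hn)] at hbI
  exact Set.image_mono (Set.subset_inter hw (Cyl_subset_Icc w)) hbI

/-- if `sigma` is strongly erasing and satisfies the optimality
condition, then every cylinder is mapped onto `[0,1]` by some iterate of
`fSigma`, and consequently `fSigma` is topologically mixing on `[0,1]`. -/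
theorem fSigma_mixing
    (k : Nat) (sigma : List Bool -> List Bool) (weps : List Bool)
    (hk : 2 ≤ k) (hlen : weps.length = k)
    (hne1 : weps ≠ List.replicate k true)
    (herase : ∀ w : List Bool, w.length = k → (sigma w = [] ↔ w = weps))
    (hSE : ∀ w : List Bool, ∃ n : Nat, [] ∈ wIter k sigma n w)
    (hOC : OC k sigma) :
    (∀ w : List Bool, ∃ h : Nat,
        (fSigma k sigma weps)^[h] '' Cyl w = Set.Icc 0 1) ∧
    (∀ A B : Set ℝ, IsOpen A → IsOpen B →
      (A ∩ Set.Icc 0 1).Nonempty → (B ∩ Set.Icc 0 1).Nonempty →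
      ∃ N : Nat, ∀ n ≥ N,
        ((fSigma k sigma weps)^[n] '' (A ∩ Set.Icc 0 1) ∩ B).Nonempty) :=
  fSigma_mixing_general k sigma weps hk hlen herase hSE hOC
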